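/- arXiv:2010.12817 — 5 statements merged into one kernel-verified Lean document; each statement's English description precedes it below -/
import Mathlib

section
/- Let A be an associative unital ℂ-algebra, let L be a simple A-module with End_A(L) = ℂ, and let L' be a simple A-module not isomorphic to L. Let m ≥ 1 and let 0 → L^{⊕m} →ι→ N →φ→ L' → 0 be a short exact sequence of A-modules. Let p₁ : L^{⊕m} → L be the projection onto the first summand, let θ₁ : L → L^{⊕m} be the inclusion of the first summand, and set K := ι(ker p₁). If the induced short exact sequence 0 → L → N/K → L' → 0 splits, then the submodule ι(θ₁(L)) of N is a direct summand of N; in particular N is decomposable. -/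
/-- Given non-isomorphic simple `A`-modules `L` (with scalar endomorphisms) and `L'`,
`m ≥ 1`, and a short exact sequence `0 → L^{⊕m} →ι→ N →φ→ L' → 0`, let
`K := ι(ker p₁)` where `p₁` is the projection onto the first summand.  If the induced
short exact sequence `0 → L → N/K → L' → 0` splits (i.e. the induced inclusion
`L → N/K`, `v ↦ ι(θ₁ v) + K`, admits a retraction), then `ι(θ₁(L))` is a direct
summand of `N`; in particular `N` is decomposable. -/
theorem direct_summand_of_induced_split
    (A : Type) [Ring A] [Algebra ℂ A]
    (L L' N : Type) [AddCommGroup L] [Module A L] [AddCommGroup L'] [Module A L']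
    [AddCommGroup N] [Module A N]
    (hL : IsSimpleModule A L) (hL' : IsSimpleModule A L')
    (hne : IsEmpty (L ≃ₗ[A] L'))
    (hEndL : ∀ f : L →ₗ[A] L, ∃ c : ℂ, ∀ x : L, f x = algebraMap ℂ A c • x)
    (m : ℕ) (hm : 1 ≤ m)
    (ι : (Fin m → L) →ₗ[A] N) (φ : N →ₗ[A] L')
    (hι : Function.Injective ι) (hφ : Function.Surjective φ)
    (hexact : LinearMap.range ι = LinearMap.ker φ)
    (K : Submodule A N)
    (hK : K = (LinearMap.ker
        (LinearMap.proj (R := A) (φ := fun _ : Fin m => L) ⟨0, hm⟩)).map ι)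
    (hsplit : ∃ r : (N ⧸ K) →ₗ[A] L, ∀ v : L,
        r (Submodule.Quotient.mk
          (ι (LinearMap.single A (fun _ : Fin m => L) ⟨0, hm⟩ v))) = v) :
    (∃ W : Submodule A N,
        IsCompl (LinearMap.range
          (ι ∘ₗ LinearMap.single A (fun _ : Fin m => L) ⟨0, hm⟩)) W) ∧
      ∃ P Q : Submodule A N, P ≠ ⊥ ∧ Q ≠ ⊥ ∧ IsCompl P Q := by
  obtain ⟨r, hr⟩ := hsplit
  set j : L →ₗ[A] N := ι ∘ₗ LinearMap.single A (fun _ : Fin m => L) ⟨0, hm⟩ with hj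
  set s : N →ₗ[A] L := r ∘ₗ K.mkQ with hs
  have hsj : ∀ v : L, s (j v) = v := by
    intro v
    simpa [hs, hj, Submodule.mkQ_apply] using hr v
  -- build the projection N → range j
  have hmem : ∀ n : N, j (s n) ∈ LinearMap.range j := fun n => ⟨s n, rfl⟩
  set f : N →ₗ[A] ↥(LinearMap.range j) :=
    (j ∘ₗ s).codRestrict (LinearMap.range j) hmem with hf
  have hproj : ∀ x : ↥(LinearMap.range j), f x = x := by
    rintro ⟨x, v, rfl⟩
    apply Subtype.ext
    simp [hf, LinearMap.codRestrict_apply, hsj v]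
  have hcompl : IsCompl (LinearMap.range j) (LinearMap.ker f) :=
    LinearMap.isCompl_of_proj hproj
  refine ⟨⟨LinearMap.ker f, hcompl⟩, LinearMap.range j, LinearMap.ker f, ?_, ?_, hcompl⟩
  · -- range j ≠ ⊥ since L is nontrivial and j injective
    have : Nontrivial L := IsSimpleModule.nontrivial A L
    obtain ⟨v, hv⟩ := exists_ne (0 : L)
    have hjinj : Function.Injective j := by
      refine hι.comp ?_
      intro a b hab
      have := congrArg (fun g => g ⟨0, hm⟩) hab
      simpa [LinearMap.single_apply] using this
    intro hbot
    apply hv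
    have : j v ∈ (⊥ : Submodule A N) := hbot ▸ LinearMap.mem_range_self j v
    have : j v = 0 := this
    have := hjinj (a₁ := v) (a₂ := 0) (by simpa using this)
    exact this
  · -- ker f ≠ ⊥ : otherwise range j = ⊤ and φ = 0, contradicting surjectivity
    intro hbot
    have htop : LinearMap.range j = ⊤ := by
      have := hcompl.sup_eq_top
      rw [hbot, sup_bot_eq] at this
      exact this
    have hφ0 : ∀ n : N, φ n = 0 := by
      intro n
      have hn : n ∈ LinearMap.range j := htop ▸ Submodule.mem_top
      obtain ⟨v, rfl⟩ := hn
      have : ι (LinearMap.single A (fun _ : Fin m => L) ⟨0, hm⟩ v) ∈ LinearMap.ker φ :=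
        hexact ▸ LinearMap.mem_range_self ι _
      simpa [hj] using this
    have : Nontrivial L' := IsSimpleModule.nontrivial A L'
    obtain ⟨y, hy⟩ := exists_ne (0 : L')
    obtain ⟨n, hn⟩ := hφ y
    exact hy (hn ▸ hφ0 n)
end

section
/- Let G be a connected, locally finite simple graph on a vertex set I, and let p, q : I → ℕ be functions such that for every i ∈ I: 2·q(i) = Σ_{j ∈ Adj(i)} p(j), 2·p(i) = Σ_{j ∈ Adj(i)} q(j), and p(i)·q(i) = 0. Assume p(s) > 0 for some s ∈ I. Then: (a) p(i) + q(i) > 0 for every i ∈ I; (b) no edge of G joins two vertices i, j with p(i) > 0 and p(j) > 0, and no edge joins two vertices i, j with q(i) > 0 and q(j) > 0. Consequently the sets {i : p(i) > 0} and {i : q(i) > 0} partition I into a bipartition of G; in particular G is bipartite (it contains no cycle of odd length). -/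
/-- Let `G` be a connected, locally finite simple graph on `I` and `p q : I → ℕ`
satisfy, for each vertex `i`: `2q(i) = Σ_{j ∈ Adj(i)} p(j)`,
`2p(i) = Σ_{j ∈ Adj(i)} q(j)` and `p(i)q(i) = 0`, with `p(s) > 0` for some `s`.
Then every vertex satisfies `p(i) + q(i) > 0`, no edge joins two vertices with
`p > 0` nor two vertices with `q > 0`, the sets `{p > 0}` and `{q > 0}` form a
bipartition of `G`, and `G` has no closed walk (in particular no cycle) of odd
length. -/
theorem bipartite_of_multiplicity_relations
    {I : Type} (G : SimpleGraph I) (hlf : G.LocallyFinite)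
    (hconn : G.Connected) (p q : I → ℕ)
    (h1 : ∀ i, 2 * q i = ∑ j ∈ @SimpleGraph.neighborFinset I G i (hlf i), p j)
    (h2 : ∀ i, 2 * p i = ∑ j ∈ @SimpleGraph.neighborFinset I G i (hlf i), q j)
    (h3 : ∀ i, p i * q i = 0)
    (s : I) (hs : 0 < p s) :
    (∀ i, 0 < p i + q i) ∧
    (∀ i j, G.Adj i j → ¬(0 < p i ∧ 0 < p j)) ∧
    (∀ i j, G.Adj i j → ¬(0 < q i ∧ 0 < q j)) ∧
    (∀ i, (0 < p i ∧ q i = 0) ∨ (0 < q i ∧ p i = 0)) ∧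
    (∀ i, ∀ w : G.Walk i i, Even w.length) := by
  -- step lemma: positivity propagates along edges
  have step : ∀ a b, G.Adj a b → 0 < p a + q a → 0 < p b + q b := by
    intro a b hab hpos
    by_contra h
    push_neg at h
    have hpb : p b = 0 := by omega
    have hqb : q b = 0 := by omega
    have hmem : a ∈ @SimpleGraph.neighborFinset I G b (hlf b) := by
      rw [SimpleGraph.mem_neighborFinset]; exact hab.symm
    have hsum1 : ∑ j ∈ @SimpleGraph.neighborFinset I G b (hlf b), p j = 0 := by
      rw [← h1 b, hqb]
    have hsum2 : ∑ j ∈ @SimpleGraph.neighborFinset I G b (hlf b), q j = 0 := by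
      rw [← h2 b, hpb]
    have hpa : p a = 0 := by
      have := (Finset.sum_eq_zero_iff.mp hsum1) a hmem
      exact this
    have hqa : q a = 0 := (Finset.sum_eq_zero_iff.mp hsum2) a hmem
    omega
  -- claim 1
  have c1 : ∀ i, 0 < p i + q i := by
    intro i
    obtain ⟨w⟩ := hconn.preconnected s i
    have : ∀ a b (w : G.Walk a b), 0 < p a + q a → 0 < p b + q b := by
      intro a b w
      induction w with
      | nil => exact id
      | cons h w ih => intro ha; exact ih (step _ _ h ha)
    exact this s i w (by omega)
  -- claim 2
  have c2 : ∀ i j, G.Adj i j → ¬(0 < p i ∧ 0 < p j) := by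
    intro i j hij ⟨hi, hj⟩
    have hqi : q i = 0 := (Nat.mul_eq_zero.mp (h3 i)).resolve_left (by omega)
    have hmem : j ∈ @SimpleGraph.neighborFinset I G i (hlf i) := by
      rw [SimpleGraph.mem_neighborFinset]; exact hij
    have := h1 i
    have hle : p j ≤ ∑ k ∈ @SimpleGraph.neighborFinset I G i (hlf i), p k :=
      Finset.single_le_sum (fun k _ => Nat.zero_le _) hmem
    rw [← h1 i] at hle
    omega
  have c3 : ∀ i j, G.Adj i j → ¬(0 < q i ∧ 0 < q j) := by
    intro i j hij ⟨hi, hj⟩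
    have hpi : p i = 0 := (Nat.mul_eq_zero.mp (h3 i)).resolve_right (by omega)
    have hmem : j ∈ @SimpleGraph.neighborFinset I G i (hlf i) := by
      rw [SimpleGraph.mem_neighborFinset]; exact hij
    have := h2 i
    have hle : q j ≤ ∑ k ∈ @SimpleGraph.neighborFinset I G i (hlf i), q k :=
      Finset.single_le_sum (fun k _ => Nat.zero_le _) hmem
    rw [← h2 i] at hle
    omega
  have c4 : ∀ i, (0 < p i ∧ q i = 0) ∨ (0 < q i ∧ p i = 0) := by
    intro i
    have hc1 := c1 i
    have hmul := Nat.mul_eq_zero.mp (h3 i)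
    rcases Nat.eq_zero_or_pos (p i) with h | h
    · right; constructor <;> omega
    · left; refine ⟨h, ?_⟩; rcases hmul with h' | h' <;> omega
  refine ⟨c1, c2, c3, c4, ?_⟩
  -- coloring
  set c : I → ZMod 2 := fun i => if 0 < p i then 0 else 1 with hc
  have hadj : ∀ a b, G.Adj a b → c b = c a + 1 := by
    intro a b hab
    rcases c4 a with ⟨hpa, hqa⟩ | ⟨hqa, hpa⟩
    · have hpb : ¬ 0 < p b := fun h => c2 a b hab ⟨hpa, h⟩
      simp [hc, hpa, hpb]
    · have hqb : ¬ 0 < q b := fun h => c3 a b hab ⟨hqa, h⟩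
      have hpb : 0 < p b := by rcases c4 b with ⟨h, _⟩ | ⟨h, _⟩; exact h; exact absurd h hqb
      have : ¬ 0 < p a := by omega
      simp [hc, hpb, this]
      decide
  have key : ∀ a b (w : G.Walk a b), (w.length : ZMod 2) = c a + c b := by
    intro a b w
    induction w with
    | nil =>
      simp only [SimpleGraph.Walk.length_nil, Nat.cast_zero]
      exact (by decide : ∀ x : ZMod 2, 0 = x + x) _
    | @cons u v x huv w' ih =>
      simp only [SimpleGraph.Walk.length_cons, Nat.cast_add, Nat.cast_one]
      rw [ih, hadj u v huv]
      exact (by decide : ∀ y z : ZMod 2, y + 1 + z + 1 = y + z) _ _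
  intro i w
  have := key i i w
  have h0 : c i + c i = 0 := (by decide : ∀ x : ZMod 2, x + x = 0) (c i)
  rw [h0] at this
  rw [even_iff_two_dvd]
  exact (ZMod.natCast_eq_zero_iff _ 2).mp this
end

section
/- Let p, q : ℤ → ℕ satisfy, for every i ∈ ℤ: 2·q(i) = p(i−1) + p(i+1), 2·p(i) = q(i−1) + q(i+1), and p(i)·q(i) = 0. Assume p(0) > 0. Then for every i ∈ ℤ: if i is even then p(i) = p(0) and q(i) = 0, and if i is odd then p(i) = 0 and q(i) = p(0). In particular p(i) + q(i) = p(0) for all i. -/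
/-- A ℕ-valued discrete-harmonic sequence on ℤ is constant. -/
lemma harmonic_nat_const (f : ℤ → ℕ)
    (h : ∀ i : ℤ, 2 * f i = f (i - 1) + f (i + 1)) :
    ∀ i : ℤ, f i = f 0 := by
  set g : ℤ → ℤ := fun i => (f i : ℤ) with hg
  have hrel : ∀ i : ℤ, g (i + 1) - g i = g i - g (i - 1) := by
    intro i
    have h' : (2 : ℤ) * g i = g (i - 1) + g (i + 1) := by
      have := h i; simp only [hg]; exact_mod_cast this
    linarith
  have hd : ∀ i : ℤ, g (i + 1) - g i = g 1 - g 0 := by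
    intro i
    induction i using Int.induction_on with
    | zero => simp
    | succ n ih =>
        have := hrel (n + 1)
        have e : ((n : ℤ) + 1) - 1 = n := by ring
        rw [e] at this
        linarith
    | pred n ih =>
        have := hrel (-(n : ℤ))
        have e : (-(n : ℤ)) - 1 = -(n + 1) := by ring
        have e2 : (-(n : ℤ)) + 1 = -n + 1 := by ring
        rw [e] at this
        rw [show (-(n:ℤ) - 1 + 1) = -n by ring, e]
        linarith
  set d : ℤ := g 1 - g 0 with hdd
  have hform : ∀ i : ℤ, g i = g 0 + i * d := by
    intro i
    induction i using Int.induction_on with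
    | zero => simp
    | succ n ih =>
        have := hd n
        push_cast at ih ⊢
        linarith
    | pred n ih =>
        have := hd (-(n : ℤ) - 1)
        have e : (-(n : ℤ) - 1) + 1 = -n := by ring
        rw [e] at this
        push_cast at ih ⊢
        linarith
  have hnn : ∀ i : ℤ, 0 ≤ g i := fun i => Int.natCast_nonneg _
  have hd0 : d = 0 := by
    by_contra hne
    have hsq : (1 : ℤ) ≤ d ^ 2 := by
      have := Int.one_le_abs hne
      nlinarith [sq_abs d]
    have h1 := hform (-(g 0 + 1) * d)
    have h2 := hnn (-(g 0 + 1) * d)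
    have h3 := hnn 0
    nlinarith
  intro i
  have hgi : g i = g 0 := by rw [hform i, hd0]; ring
  have h' : (f i : ℤ) = (f 0 : ℤ) := by simpa [hg] using hgi
  exact_mod_cast h'

/-- The multiplicity equations on the doubly infinite path `A∞∞`: if
`p q : ℤ → ℕ` satisfy `2q(i) = p(i−1) + p(i+1)`, `2p(i) = q(i−1) + q(i+1)` and
`p(i)q(i) = 0` for all `i`, and `p(0) > 0`, then for even `i` one has
`p(i) = p(0)` and `q(i) = 0`, for odd `i` one has `p(i) = 0` and `q(i) = p(0)`;
in particular `p(i) + q(i) = p(0)` for all `i`. -/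
theorem ainfinf_multiplicities (p q : ℤ → ℕ)
    (h1 : ∀ i : ℤ, 2 * q i = p (i - 1) + p (i + 1))
    (h2 : ∀ i : ℤ, 2 * p i = q (i - 1) + q (i + 1))
    (h3 : ∀ i : ℤ, p i * q i = 0)
    (h0 : 0 < p 0) :
    (∀ i : ℤ, (Even i → p i = p 0 ∧ q i = 0) ∧ (Odd i → p i = 0 ∧ q i = p 0)) ∧
    ∀ i : ℤ, p i + q i = p 0 := by
  set f : ℤ → ℕ := fun i => if Even i then p i else q i with hf
  have hharm : ∀ i : ℤ, 2 * f i = f (i - 1) + f (i + 1) := by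
    intro i
    by_cases he : Even i
    · have ho1 : ¬ Even (i - 1) := by simp [Int.even_sub, he]
      have ho2 : ¬ Even (i + 1) := by simp [Int.even_add_one, he]
      simp only [hf, if_pos he, if_neg ho1, if_neg ho2]
      exact h2 i
    · have ho1 : Even (i - 1) := by
        rcases Int.even_or_odd i with h | h
        · exact absurd h he
        · rcases h with ⟨k, hk⟩; exact ⟨k, by omega⟩
      have ho2 : Even (i + 1) := by rcases ho1 with ⟨k, hk⟩; exact ⟨k + 1, by omega⟩
      simp only [hf, if_neg he, if_pos ho1, if_pos ho2]
      exact h1 i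
  have hconst := harmonic_nat_const f hharm
  have hf0 : f 0 = p 0 := by simp [hf]
  have key : ∀ i : ℤ, (Even i → p i = p 0 ∧ q i = 0) ∧ (Odd i → p i = 0 ∧ q i = p 0) := by
    intro i
    constructor
    · intro he
      have hp : p i = p 0 := by
        have := hconst i; rw [hf0] at this; simpa [hf, if_pos he] using this
      refine ⟨hp, ?_⟩
      have := h3 i
      rw [hp] at this
      exact (Nat.mul_eq_zero.mp this).resolve_left (by omega)
    · intro ho
      have he : ¬ Even i := Int.not_even_iff_odd.mpr ho
      have hq : q i = p 0 := by
        have := hconst i; rw [hf0] at this; simpa [hf, if_neg he] using this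
      refine ⟨?_, hq⟩
      have := h3 i
      rw [hq] at this
      exact (Nat.mul_eq_zero.mp this).resolve_right (by omega)
  refine ⟨key, fun i => ?_⟩
  rcases Int.even_or_odd i with h | h
  · have := (key i).1 h; omega
  · have := (key i).2 h; omega
end

section
/- Consider the graph D∞ with vertex set ℕ and edges {0,2}, {1,2}, and {j, j+1} for all j ≥ 2 (so Adj(0) = Adj(1) = {2}, Adj(2) = {0,1,3}, and Adj(j) = {j−1, j+1} for j ≥ 3). Let p, q : ℕ → ℕ satisfy, for every vertex i: 2·q(i) = Σ_{j ∈ Adj(i)} p(j), 2·p(i) = Σ_{j ∈ Adj(i)} q(j), and p(i)·q(i) = 0. Assume p(0) > 0. Then q(0) = 0, p(1) = p(0), q(1) = 0, and for every j ≥ 2: if j is even then p(j) = 0 and q(j) = 2·p(0), while if j is odd then p(j) = 2·p(0) and q(j) = 0. -/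
/-- The neighbour sets of the graph `D∞` on `ℕ`: vertices `0` and `1` are each
adjacent only to `2`, and `2, 3, 4, …` form an infinite path. -/
def dInfAdj : ℕ → Finset ℕ
  | 0 => {2}
  | 1 => {2}
  | 2 => {0, 1, 3}
  | (j + 3) => {j + 2, j + 4}

/-- The multiplicity equations on `D∞`: if `p q : ℕ → ℕ` satisfy
`2q(i) = Σ_{j ∈ Adj(i)} p(j)`, `2p(i) = Σ_{j ∈ Adj(i)} q(j)` and `p(i)q(i) = 0`
for every vertex `i`, and `p(0) > 0`, then `q(0) = 0`, `p(1) = p(0)`,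
`q(1) = 0`, and for `j ≥ 2`: if `j` is even then `p(j) = 0` and
`q(j) = 2p(0)`, while if `j` is odd then `p(j) = 2p(0)` and `q(j) = 0`. -/
theorem dinf_multiplicities (p q : ℕ → ℕ)
    (h1 : ∀ i : ℕ, 2 * q i = ∑ j ∈ dInfAdj i, p j)
    (h2 : ∀ i : ℕ, 2 * p i = ∑ j ∈ dInfAdj i, q j)
    (h3 : ∀ i : ℕ, p i * q i = 0)
    (h0 : 0 < p 0) :
    q 0 = 0 ∧ p 1 = p 0 ∧ q 1 = 0 ∧
    ∀ j : ℕ, 2 ≤ j →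
      (Even j → p j = 0 ∧ q j = 2 * p 0) ∧
      (Odd j → p j = 2 * p 0 ∧ q j = 0) := by
  have e10 := h1 0; have e20 := h2 0
  have e11 := h1 1; have e21 := h2 1
  have e12 := h1 2
  simp only [dInfAdj, Finset.sum_singleton, Finset.sum_insert, Finset.mem_insert,
    Finset.mem_singleton, Finset.sum_pair] at e10 e20 e11 e21 e12
  norm_num at e12
  have hq0 : q 0 = 0 := by
    rcases Nat.mul_eq_zero.mp (h3 0) with h | h
    · omega
    · exact h
  have hp2 : p 2 = 0 := by omega
  have hq2 : q 2 = 2 * p 0 := by omega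
  have hq1 : q 1 = 0 := by omega
  have hp1 : p 1 = p 0 := by omega
  have hp3 : p 3 = 2 * p 0 := by omega
  have hq3 : q 3 = 0 := by
    rcases Nat.mul_eq_zero.mp (h3 3) with h | h
    · omega
    · exact h
  -- K k : state at vertex k+2, by parity of k
  have key : ∀ k : ℕ,
      (k % 2 = 0 → p (k + 2) = 0 ∧ q (k + 2) = 2 * p 0) ∧
      (k % 2 = 1 → p (k + 2) = 2 * p 0 ∧ q (k + 2) = 0) := by
    have aux : ∀ k : ℕ,
        ((k % 2 = 0 → p (k + 2) = 0 ∧ q (k + 2) = 2 * p 0) ∧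
         (k % 2 = 1 → p (k + 2) = 2 * p 0 ∧ q (k + 2) = 0)) ∧
        (((k+1) % 2 = 0 → p (k + 3) = 0 ∧ q (k + 3) = 2 * p 0) ∧
         ((k+1) % 2 = 1 → p (k + 3) = 2 * p 0 ∧ q (k + 3) = 0)) := by
      intro k
      induction k with
      | zero =>
        refine ⟨⟨fun _ => ⟨hp2, hq2⟩, by omega⟩, ⟨by omega, fun _ => ⟨hp3, hq3⟩⟩⟩
      | succ n ih =>
        obtain ⟨⟨ih00, ih01⟩, ⟨ih10, ih11⟩⟩ := ih
        refine ⟨⟨ih10, ih11⟩, ?_⟩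
        -- vertex n+3 equations
        have f1 := h1 (n + 3); have f2 := h2 (n + 3)
        have hne : n + 2 ≠ n + 4 := by omega
        simp only [dInfAdj, Finset.sum_pair hne] at f1 f2
        rcases Nat.even_or_odd n with he | ho
        · -- n even: n+2 even, n+3 odd, target n+4 even
          have hn : n % 2 = 0 := Nat.even_iff.mp he
          obtain ⟨hp2', hq2'⟩ := ih00 hn
          obtain ⟨hp3', hq3'⟩ := ih11 (by omega)
          have hq4 : q (n + 4) = 2 * p 0 := by omega
          have hp4 : p (n + 4) = 0 := by
            rcases Nat.mul_eq_zero.mp (h3 (n + 4)) with h | h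
            · exact h
            · omega
          exact ⟨fun _ => ⟨hp4, hq4⟩, by omega⟩
        · -- n odd: n+2 odd, n+3 even, target n+4 odd
          have hn : n % 2 = 1 := Nat.odd_iff.mp ho
          obtain ⟨hp2', hq2'⟩ := ih01 hn
          obtain ⟨hp3', hq3'⟩ := ih10 (by omega)
          have hp4 : p (n + 4) = 2 * p 0 := by omega
          have hq4 : q (n + 4) = 0 := by
            rcases Nat.mul_eq_zero.mp (h3 (n + 4)) with h | h
            · omega
            · exact h
          exact ⟨by omega, fun _ => ⟨hp4, hq4⟩⟩
    exact fun k => (aux k).1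
  refine ⟨hq0, hp1, hq1, ?_⟩
  intro j hj
  obtain ⟨k, rfl⟩ : ∃ k, j = k + 2 := ⟨j - 2, by omega⟩
  obtain ⟨k0, k1⟩ := key k
  constructor
  · intro he
    exact k0 (by have := Nat.even_iff.mp he; omega)
  · intro ho
    exact k1 (by have := Nat.odd_iff.mp ho; omega)
end

section
/- For a fixed natural number k, let Diag_{k;2} be the set of pairs (i, S) where i ∈ ℕ and S is a finite subset of the positive integers with i + |S| = k, and let Diag_{k;1} be the set of triples (i, S, ε) where i ∈ ℕ, S is a finite subset of the positive integers with i + |S| = k, and ε is a sign in {+1, −1} if i ≥ 1 while ε is absent (takes a fixed dummy value) if i = 0. Define τ : Diag_{k;2} → Diag_{k;1} by τ(i, S) = (i', S', ε) where i' = i + 1 if 1 ∈ S and i' = i otherwise, S' = {a − 1 : a ∈ S, a ≥ 2}, and ε = +1 if 1 ∈ S, ε = −1 if 1 ∉ S and i ≥ 1, and ε is absent if 1 ∉ S and i = 0. Then τ is well defined (i.e. i' + |S'| = k and the sign is present exactly when i' ≥ 1) and is a bijection from Diag_{k;2} onto Diag_{k;1}. -/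
/-- `Diag_{k;2}`: pairs `(i, S)` with `i ∈ ℕ` and `S` a finite set of positive
integers with `i + |S| = k`. -/
def Diag2 (k : ℕ) : Set (ℕ × Finset ℕ) :=
  {x | (∀ a ∈ x.2, 0 < a) ∧ x.1 + x.2.card = k}

/-- `Diag_{k;1}`: triples `(i, S, ε)` with `i ∈ ℕ`, `S` a finite set of positive
integers with `i + |S| = k`, and a sign `ε ∈ {+1, −1}` (encoded as a `Bool`,
`true = +1`) which is present when `i ≥ 1` and takes the fixed dummy value
`true` when `i = 0`. -/
def Diag1 (k : ℕ) : Set (ℕ × Finset ℕ × Bool) :=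
  {x | (∀ a ∈ x.2.1, 0 < a) ∧ x.1 + x.2.1.card = k ∧ (x.1 = 0 → x.2.2 = true)}

/-- The map `τ`: remove the symbol `>` and shift all entries at nonzero
positions one step to the left, adding the appropriate sign. -/
def tauFun (x : ℕ × Finset ℕ) : ℕ × Finset ℕ × Bool :=
  ⟨if 1 ∈ x.2 then x.1 + 1 else x.1,
   (x.2.filter (fun a => 2 ≤ a)).image (fun a => a - 1),
   if 1 ∈ x.2 then true else (if 1 ≤ x.1 then false else true)⟩

/-- Explicit inverse of `tauFun`. -/
def sigmaFun (y : ℕ × Finset ℕ × Bool) : ℕ × Finset ℕ :=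
  if y.2.2 = true ∧ 1 ≤ y.1 then (y.1 - 1, insert 1 (y.2.1.image (fun a => a + 1)))
  else (y.1, y.2.1.image (fun a => a + 1))

lemma filter_eq_erase (S : Finset ℕ) (hS : ∀ a ∈ S, 0 < a) :
    S.filter (fun a => 2 ≤ a) = S.erase 1 := by
  ext a
  simp only [Finset.mem_filter, Finset.mem_erase]
  constructor
  · rintro ⟨ha, h2⟩; exact ⟨by omega, ha⟩
  · rintro ⟨hne, ha⟩; exact ⟨ha, by have := hS a ha; omega⟩

lemma injOn_sub (S : Finset ℕ) (hS : ∀ a ∈ S, 2 ≤ a) :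
    Set.InjOn (fun a => a - 1) S := by
  intro a ha b hb h
  have := hS a ha; have := hS b hb
  simp only at h; omega

lemma image_sub_add (S : Finset ℕ) (hS : ∀ a ∈ S, 2 ≤ a) :
    (S.image (fun a => a - 1)).image (fun a => a + 1) = S := by
  rw [Finset.image_image]
  ext a
  simp only [Finset.mem_image, Function.comp_apply]
  constructor
  · rintro ⟨b, hb, rfl⟩
    have := hS b hb
    rw [Nat.sub_add_cancel (by omega)]
    exact hb
  · intro ha; exact ⟨a, ha, by have := hS a ha; omega⟩

lemma image_add_sub (T : Finset ℕ) :
    ((T.image (fun a => a + 1)).image (fun a => a - 1)) = T := by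
  rw [Finset.image_image]
  ext a
  simp only [Finset.mem_image, Function.comp_apply]
  constructor
  · rintro ⟨b, hb, rfl⟩; simpa using hb
  · intro ha; exact ⟨a, ha, rfl⟩

lemma one_notMem_shift (T : Finset ℕ) (hT : ∀ a ∈ T, 0 < a) :
    1 ∉ T.image (fun a => a + 1) := by
  simp only [Finset.mem_image, not_exists]
  rintro a ⟨ha, h⟩
  have := hT a ha; omega

lemma erase_mem_two (S : Finset ℕ) (hS : ∀ a ∈ S, 0 < a) :
    ∀ a ∈ S.erase 1, 2 ≤ a := by
  intro a ha
  rw [Finset.mem_erase] at ha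
  have := hS a ha.2; omega

lemma tau_mapsTo (k : ℕ) : Set.MapsTo tauFun (Diag2 k) (Diag1 k) := by
  rintro ⟨i, S⟩ ⟨hpos, hcard⟩
  dsimp only at hpos hcard
  have h2 := erase_mem_two S hpos
  have hinj := injOn_sub (S.erase 1) h2
  have hcard' : ((S.filter (fun a => 2 ≤ a)).image (fun a => a - 1)).card = (S.erase 1).card := by
    rw [filter_eq_erase S hpos, Finset.card_image_of_injOn hinj]
  refine ⟨?_, ?_, ?_⟩
  · intro a ha
    simp only [tauFun, filter_eq_erase S hpos, Finset.mem_image] at ha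
    obtain ⟨b, hb, rfl⟩ := ha
    have := h2 b hb; omega
  · simp only [tauFun, hcard']
    by_cases h1 : 1 ∈ S
    · rw [if_pos h1, Finset.card_erase_of_mem h1]
      have : 1 ≤ S.card := Finset.card_pos.mpr ⟨1, h1⟩
      omega
    · rw [if_neg h1, Finset.erase_eq_of_notMem h1]
      exact hcard
  · simp only [tauFun]
    by_cases h1 : 1 ∈ S
    · simp [h1]
    · rw [if_neg h1, if_neg h1]
      intro hi
      rw [if_neg (by omega)]

lemma sigma_tau (k : ℕ) (x : ℕ × Finset ℕ) (hx : x ∈ Diag2 k) :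
    sigmaFun (tauFun x) = x := by
  obtain ⟨i, S⟩ := x
  obtain ⟨hpos, hcard⟩ := hx
  have h2 := erase_mem_two S hpos
  by_cases h1 : 1 ∈ S
  · have : tauFun (i, S) = (i + 1, (S.erase 1).image (fun a => a - 1), true) := by
      simp [tauFun, filter_eq_erase S hpos, h1]
    rw [this]
    simp only [sigmaFun, if_pos (by simp : (true = true) ∧ 1 ≤ i + 1)]
    rw [image_sub_add _ h2]
    simp [Finset.insert_erase h1]
  · have hS1 : S.erase 1 = S := Finset.erase_eq_of_notMem h1
    have : tauFun (i, S) = (i, (S.erase 1).image (fun a => a - 1),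
        if 1 ≤ i then false else true) := by
      simp [tauFun, filter_eq_erase S hpos, h1]
    rw [this]
    have hcond : ¬ ((if 1 ≤ i then false else true) = true ∧ 1 ≤ i) := by
      by_cases hi : 1 ≤ i <;> simp [hi]
    simp only [sigmaFun, if_neg hcond]
    rw [image_sub_add _ h2, hS1]

lemma sigma_mem (k : ℕ) (y : ℕ × Finset ℕ × Bool) (hy : y ∈ Diag1 k) :
    sigmaFun y ∈ Diag2 k := by
  obtain ⟨j, T, ε⟩ := y
  obtain ⟨hpos, hcard, hsign⟩ := hy
  dsimp only at hpos hcard hsign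
  have hcardT : (T.image (fun a => a + 1)).card = T.card :=
    Finset.card_image_of_injective _ (fun a b => by omega)
  have hposT : ∀ a ∈ T.image (fun a => a + 1), 0 < a := by
    simp only [Finset.mem_image]
    rintro a ⟨b, hb, rfl⟩; omega
  by_cases h : ε = true ∧ 1 ≤ j
  · simp only [sigmaFun, if_pos h]
    refine ⟨?_, ?_⟩
    · intro a ha
      rcases Finset.mem_insert.mp ha with rfl | ha
      · omega
      · exact hposT a ha
    · rw [Finset.card_insert_of_notMem (one_notMem_shift T hpos), hcardT]
      omega
  · simp only [sigmaFun, if_neg h]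
    exact ⟨hposT, by rw [hcardT]; exact hcard⟩

lemma tau_sigma (k : ℕ) (y : ℕ × Finset ℕ × Bool) (hy : y ∈ Diag1 k) :
    tauFun (sigmaFun y) = y := by
  obtain ⟨j, T, ε⟩ := y
  obtain ⟨hpos, hcard, hsign⟩ := hy
  dsimp only at hpos hcard hsign
  have hnm := one_notMem_shift T hpos
  have hposT : ∀ a ∈ T.image (fun a => a + 1), 0 < a := by
    simp only [Finset.mem_image]
    rintro a ⟨b, hb, rfl⟩; omega
  by_cases h : ε = true ∧ 1 ≤ j
  · simp only [sigmaFun, if_pos h]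
    have hmem : 1 ∈ insert 1 (T.image (fun a => a + 1)) := Finset.mem_insert_self _ _
    have hfil : (insert 1 (T.image (fun a => a + 1))).filter (fun a => 2 ≤ a)
        = T.image (fun a => a + 1) := by
      rw [filter_eq_erase _ (by
        intro a ha
        rcases Finset.mem_insert.mp ha with rfl | ha
        · omega
        · exact hposT a ha), Finset.erase_insert hnm]
    simp only [tauFun, if_pos hmem, hfil, image_add_sub]
    obtain ⟨hε, hj⟩ := h
    rw [hε]
    congr 1
    omega
  · simp only [sigmaFun, if_neg h]
    have hfil : (T.image (fun a => a + 1)).filter (fun a => 2 ≤ a)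
        = T.image (fun a => a + 1) := by
      rw [filter_eq_erase _ hposT, Finset.erase_eq_of_notMem hnm]
    simp only [tauFun, if_neg hnm, hfil, image_add_sub]
    by_cases hj : 1 ≤ j
    · have hε : ε = false := by
        rcases Bool.eq_false_or_eq_true ε with hε | hε
        · exact absurd ⟨hε, hj⟩ h
        · exact hε
      rw [if_pos hj, hε]
    · have hε : ε = true := hsign (by omega)
      rw [if_neg hj, hε]

/-- `τ` is well defined and is a bijection from `Diag_{k;2}` onto `Diag_{k;1}`. -/
theorem tau_bijOn (k : ℕ) : Set.BijOn tauFun (Diag2 k) (Diag1 k) := by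
  refine ⟨tau_mapsTo k, ?_, ?_⟩
  · intro x hx y hy h
    rw [← sigma_tau k x hx, ← sigma_tau k y hy, h]
  · intro y hy
    exact ⟨sigmaFun y, sigma_mem k y hy, tau_sigma k y hy⟩
end
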